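/- The action of S_d on P_d = k[X_1,...,X_d] ⊗ Λ(θ_1,...,θ_d), given by permuting the X variables and by s_i(θ_j) = θ_j + δ_{i,j}(X_i - X_{i+1})θ_{i+1}, is a well-defined group action: each s_i defines a ring automorphism of order 2 and the braid relations s_i s_{i+1} s_i = s_{i+1} s_i s_{i+1} hold on P_d. -/

import Mathlib

/-!
With `R = k[X₁,…,X_d]`, `P_d` is the exterior algebra `Λ_R(R^d)` and `θ_j` is the `j`-th basis
vector. The operator `sᵢ` is the exterior algebra functor applied to a semilinear map of
`R^d` over the ring automorphism of `R` swapping `Xᵢ` and `Xᵢ₊₁`. Ring endomorphisms of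
`Λ_R(R^d)` are determined by their values on `R` and on `R^d`, so both the involutivity and the
braid relation reduce to the relations `(a b)² = 1` and `(a b)(b c)(a b) = (b c)(a b)(b c)`
among transpositions, acting on `R`, and to a direct computation on `R^d`.
-/

open MvPolynomial

/-- The ring `P_d = k[X₁,…,X_d] ⊗ Λ(θ₁,…,θ_d)` (with `d = n + 1`), realized as the
exterior algebra over the polynomial ring of the free module of rank `d`. -/
abbrev Pd (k : Type*) [Field k] (n : ℕ) : Type _ :=
  ExteriorAlgebra (MvPolynomial (Fin (n + 1)) k)
    (Fin (n + 1) → MvPolynomial (Fin (n + 1)) k)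

/-- The exterior generator `θ_j` of `P_d`. -/
noncomputable def θv {k : Type*} [Field k] {n : ℕ} (j : Fin (n + 1)) : Pd k n :=
  ExteriorAlgebra.ι (MvPolynomial (Fin (n + 1)) k) (Pi.single j 1)
namespace ExteriorAlgebra

variable {R S M N : Type*} [CommRing R] [CommRing S] [AddCommGroup M] [Module R M]
  [AddCommGroup N] [Module S N]

theorem ringHom_ext {A : Type*} [Semiring A] {f g : ExteriorAlgebra R M →+* A}
    (h_algebraMap : ∀ r, f (algebraMap R _ r) = g (algebraMap R _ r))
    (h_ι : ∀ m, f (ι R m) = g (ι R m)) : f = g := by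
  ext x
  induction x using ExteriorAlgebra.induction with
  | algebraMap r => exact h_algebraMap r
  | ι m => exact h_ι m
  | mul x y hx hy => rw [map_mul, map_mul, hx, hy]
  | add x y hx hy => rw [map_add, map_add, hx, hy]

/-- Through `σ`, `ExteriorAlgebra S N` is an `R`-algebra for which `g` is `R`-linear, so the
universal property of `ExteriorAlgebra R M` applies. -/
noncomputable def mapSemilinear (σ : R →+* S) (g : M →ₛₗ[σ] N) :
    ExteriorAlgebra R M →+* ExteriorAlgebra S N :=
  letI := Algebra.compHom (ExteriorAlgebra S N) σ
  (lift R ⟨{ toFun := fun m => ι S (g m)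
             map_add' := fun m m' => by rw [map_add, map_add]
             map_smul' := fun r m => by rw [map_smulₛₗ, map_smul]; rfl },
    fun m => ι_sq_zero (g m)⟩).toRingHom

@[simp]
theorem mapSemilinear_algebraMap (σ : R →+* S) (g : M →ₛₗ[σ] N) (r : R) :
    mapSemilinear σ g (algebraMap R _ r) = algebraMap S _ (σ r) :=
  letI := Algebra.compHom (ExteriorAlgebra S N) σ
  AlgHom.commutes _ r

@[simp]
theorem mapSemilinear_ι (σ : R →+* S) (g : M →ₛₗ[σ] N) (m : M) :
    mapSemilinear σ g (ι R m) = ι S (g m) :=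
  letI := Algebra.compHom (ExteriorAlgebra S N) σ
  lift_ι_apply R _ _ m

end ExteriorAlgebra

section

variable {I k : Type*} [DecidableEq I] [CommRing k]

open Equiv

theorem rename_swap_rename_swap (a b : I) (p : MvPolynomial I k) :
    rename (swap a b) (rename (swap a b) p) = p := by
  rw [rename_rename, ← Perm.coe_mul, swap_mul_self, Perm.coe_one, rename_id, AlgHom.id_apply]

theorem rename_swap_braid {a b c : I} (hab : a ≠ b) (hbc : b ≠ c) (hac : a ≠ c)
    (p : MvPolynomial I k) :
    rename (swap a b) (rename (swap b c) (rename (swap a b) p))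
      = rename (swap b c) (rename (swap a b) (rename (swap b c) p)) := by
  have h₁ : swap a b * swap b c * swap a b = swap c a := by
    rw [swap_comm a b, swap_comm b c, swap_mul_swap_mul_swap hbc.symm hac.symm, swap_comm]
  have h₂ : swap b c * swap a b * swap b c = swap c a := swap_mul_swap_mul_swap hab hac
  simp only [rename_rename, ← Perm.coe_mul, ← mul_assoc, h₁, h₂]

/-- The action on degree-one elements: `Σ vⱼ θⱼ ↦ Σ σ(vⱼ) θⱼ + σ(v_a) (X_a - X_b) θ_b`, where
`σ` swaps `X_a` and `X_b`. -/
noncomputable def swapTwist (a b : I) :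
    (I → MvPolynomial I k)
      →ₛₗ[(rename (R := k) (swap a b) : MvPolynomial I k →+* MvPolynomial I k)]
      (I → MvPolynomial I k) where
  toFun v m := rename (swap a b) (v m) + if m = b then rename (swap a b) (v a) * (X a - X b) else 0
  map_add' v w := by
    funext m
    simp only [Pi.add_apply, map_add]
    split_ifs <;> ring
  map_smul' r v := by
    funext m
    simp only [Pi.smul_apply, smul_eq_mul, map_mul, RingHom.coe_coe]
    split_ifs <;> ring

theorem swapTwist_apply (a b : I) (v : I → MvPolynomial I k) (m : I) :
    swapTwist a b v m
      = rename (swap a b) (v m) + if m = b then rename (swap a b) (v a) * (X a - X b) else 0 :=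
  rfl

theorem swapTwist_swapTwist {a b : I} (hab : a ≠ b) (v : I → MvPolynomial I k) :
    swapTwist a b (swapTwist a b v) = v := by
  funext m
  simp only [swapTwist_apply, if_neg hab, apply_ite (rename _), map_add, map_mul, map_sub,
    map_zero, rename_X, swap_apply_left, swap_apply_right, rename_swap_rename_swap]
  split_ifs <;> ring

theorem swapTwist_braid {a b c : I} (hab : a ≠ b) (hbc : b ≠ c) (hac : a ≠ c)
    (v : I → MvPolynomial I k) :
    swapTwist a b (swapTwist b c (swapTwist a b v))
      = swapTwist b c (swapTwist a b (swapTwist b c v)) := by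
  have e₁ : swap a b c = c := swap_apply_of_ne_of_ne hac.symm hbc.symm
  have e₂ : swap b c a = a := swap_apply_of_ne_of_ne hab hac
  funext m
  simp only [swapTwist_apply, if_neg hab, if_neg hac, apply_ite (rename _), map_add, map_mul,
    map_sub, map_zero, rename_X, swap_apply_left, swap_apply_right, e₁, e₂,
    rename_swap_braid hab hbc hac]
  split_ifs <;> ring

theorem swapTwist_single_self (a b : I) :
    swapTwist a b (Pi.single a 1)
      = Pi.single a 1 + (X a - X b : MvPolynomial I k) • Pi.single b 1 := by
  funext m
  simp only [swapTwist_apply, Pi.single_apply, apply_ite (rename _), map_one, map_zero,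
    Pi.add_apply, Pi.smul_apply, smul_eq_mul]
  split_ifs <;> simp_all

theorem swapTwist_single_of_ne {a b j : I} (hj : j ≠ a) :
    swapTwist a b (Pi.single j (1 : MvPolynomial I k)) = Pi.single j 1 := by
  funext m
  simp only [swapTwist_apply, Pi.single_apply, if_neg hj.symm, apply_ite (rename _), map_one,
    map_zero, zero_mul, ite_self, add_zero]

open ExteriorAlgebra

noncomputable def swapAction (a b : I) :
    ExteriorAlgebra (MvPolynomial I k) (I → MvPolynomial I k)
      →+* ExteriorAlgebra (MvPolynomial I k) (I → MvPolynomial I k) :=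
  mapSemilinear _ (swapTwist a b)

@[simp]
theorem swapAction_algebraMap (a b : I) (p : MvPolynomial I k) :
    swapAction a b (algebraMap _ (ExteriorAlgebra _ (I → MvPolynomial I k)) p)
      = algebraMap _ _ (rename (swap a b) p) :=
  mapSemilinear_algebraMap _ _ p

@[simp]
theorem swapAction_ι (a b : I) (v : I → MvPolynomial I k) :
    swapAction a b (ι _ v) = ι _ (swapTwist a b v) :=
  mapSemilinear_ι _ _ v

theorem swapAction_comp_self {a b : I} (hab : a ≠ b) :
    (swapAction (k := k) a b).comp (swapAction a b) = RingHom.id _ :=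
  ringHom_ext
    (fun p => by simp only [RingHom.comp_apply, swapAction_algebraMap, rename_swap_rename_swap,
      RingHom.id_apply])
    (fun v => by
      simp only [RingHom.comp_apply, swapAction_ι, swapTwist_swapTwist hab, RingHom.id_apply])

theorem swapAction_braid {a b c : I} (hab : a ≠ b) (hbc : b ≠ c) (hac : a ≠ c) :
    (swapAction (k := k) a b).comp ((swapAction b c).comp (swapAction a b))
      = (swapAction b c).comp ((swapAction a b).comp (swapAction b c)) :=
  ringHom_ext
    (fun p => by
      simp only [RingHom.comp_apply, swapAction_algebraMap, rename_swap_braid hab hbc hac])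
    (fun v => by simp only [RingHom.comp_apply, swapAction_ι, swapTwist_braid hab hbc hac])

end

/-- the action of `S_d` on `P_d = k[X₁,…,X_d] ⊗ Λ(θ₁,…,θ_d)`, given by
permuting the `X`-variables and `sᵢ(θⱼ) = θⱼ + δ_{i,j}(Xᵢ - Xᵢ₊₁)θᵢ₊₁`, is a
well-defined group action: each `sᵢ` is a ring automorphism of order 2 and the
braid relations `sᵢ sᵢ₊₁ sᵢ = sᵢ₊₁ sᵢ sᵢ₊₁` hold on `P_d`. -/
theorem Sd_action_on_Pd_well_defined {k : Type*} [Field k] {n : ℕ} :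
    ∃ s : Fin n → (Pd k n ≃+* Pd k n),
      (∀ (i : Fin n) (r : MvPolynomial (Fin (n + 1)) k),
        s i (algebraMap (MvPolynomial (Fin (n + 1)) k) (Pd k n) r)
          = algebraMap (MvPolynomial (Fin (n + 1)) k) (Pd k n) (rename (Equiv.swap i.castSucc i.succ) r)) ∧
      (∀ i : Fin n, s i (θv i.castSucc)
          = θv i.castSucc
            + algebraMap (MvPolynomial (Fin (n + 1)) k) (Pd k n) (X i.castSucc - X i.succ) * θv i.succ) ∧
      (∀ (i : Fin n) (j : Fin (n + 1)), j ≠ i.castSucc → s i (θv j) = θv j) ∧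
      (∀ (i : Fin n) (x : Pd k n), s i (s i x) = x) ∧
      (∀ i j : Fin n, (j : ℕ) = (i : ℕ) + 1 →
        ∀ x : Pd k n, s i (s j (s i x)) = s j (s i (s j x))) := by
  have hne (i : Fin n) : i.castSucc ≠ i.succ := Fin.castSucc_lt_succ.ne
  refine ⟨fun i => RingEquiv.ofRingHom (swapAction _ _) (swapAction _ _)
    (swapAction_comp_self (hne i)) (swapAction_comp_self (hne i)), ?_, ?_, ?_, ?_, ?_⟩
  · exact fun i r => swapAction_algebraMap _ _ r
  · intro i
    rw [RingEquiv.ofRingHom_apply, θv, θv, swapAction_ι, swapTwist_single_self, map_add, map_smul,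
      Algebra.smul_def]
  · intro i j hj
    rw [RingEquiv.ofRingHom_apply, θv, swapAction_ι, swapTwist_single_of_ne hj]
  · exact fun i => RingHom.congr_fun (swapAction_comp_self (hne i))
  · intro i j hij x
    have hb : j.castSucc = i.succ := Fin.ext hij
    have hac : i.castSucc ≠ j.succ := (Fin.lt_def.2 (by simp [hij])).ne
    simp only [RingEquiv.ofRingHom_apply, hb]
    exact RingHom.congr_fun (swapAction_braid (hne i) (hb ▸ hne j) hac) x
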